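/- arXiv:1402.4749 — 7 statements merged into one kernel-verified Lean document; each statement's English description precedes it below -/
import Mathlib

section
/- Let Γ be a group. On the set of infinite virtually cyclic subgroups of Γ, the relation declaring two such subgroups H and K equivalent when H ∩ K is infinite is an equivalence relation. In particular (the nontrivial part, transitivity): if H, K, L are infinite virtually cyclic subgroups of Γ such that H ∩ K is infinite and K ∩ L is infinite, then H ∩ L is infinite. -/
/-- A group is virtually cyclic if it contains a cyclic subgroup of finite index. -/
def VirtuallyCyclic (G : Type*) [Group G] : Prop :=
  ∃ C : Subgroup G, IsCyclic C ∧ C.FiniteIndex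

/-!
In an infinite virtually cyclic group every infinite subgroup has finite index: it meets the
cyclic subgroup of finite index in a nontrivial, hence finite index, subgroup. So for infinite
virtually cyclic `K`, the intersection `H ⊓ K` is infinite exactly when `H` has finite index
relative to `K`, and transitivity follows from that of finite relative index.
-/

namespace Subgroup

variable {G : Type*} [Group G]

theorem infinite_of_finiteIndex [Infinite G] (H : Subgroup G) [H.FiniteIndex] : Infinite H :=
  not_finite_iff_infinite.mp fun _ =>
    have := (finite_iff_finite_and_finiteIndex H).mpr ⟨‹_›, ‹_›⟩
    not_finite G

theorem infinite_subgroupOf_iff {H K : Subgroup G} :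
    Infinite (H.subgroupOf K) ↔ Infinite ↥(H ⊓ K) := by
  rw [← inf_subgroupOf_right]
  exact (subgroupOfEquivOfLe inf_le_right).toEquiv.infinite_iff

theorem infinite_inf_of_relIndex_ne_zero {H K : Subgroup G} [Infinite K]
    (h : H.relIndex K ≠ 0) : Infinite ↥(H ⊓ K) :=
  have : (H.subgroupOf K).FiniteIndex := ⟨h⟩
  infinite_subgroupOf_iff.mp (infinite_of_finiteIndex _)

end Subgroup

open Subgroup

/-- The cosets of `D ∋ g ^ n` are represented by `g ^ r` with `0 ≤ r < |n|`. -/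
theorem IsCyclic.finiteIndex_of_ne_bot {C : Type*} [Group C] [IsCyclic C] {D : Subgroup C}
    (hD : D ≠ ⊥) : D.FiniteIndex := by
  obtain ⟨g, hg⟩ := IsCyclic.exists_generator (α := C)
  obtain ⟨⟨c, hcD⟩, hc1⟩ := D.ne_bot_iff_exists_ne_one.mp hD
  obtain ⟨n, rfl⟩ := hg c
  have hn : n ≠ 0 := by
    rintro rfl
    simp at hc1
  have : Finite (C ⧸ D) := by
    refine Finite.of_surjective
      (fun r : Set.Ico (0 : ℤ) |n| => (QuotientGroup.mk (g ^ (r : ℤ)) : C ⧸ D)) ?_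
    intro x
    induction x using QuotientGroup.induction_on with | H x => ?_
    obtain ⟨m, rfl⟩ := hg x
    refine ⟨⟨m % n, Int.emod_nonneg m hn, Int.emod_lt_abs m hn⟩, QuotientGroup.eq.mpr ?_⟩
    have hm : -(m % n) + m = n * (m / n) := by rw [Int.emod_def]; ring
    rw [← zpow_neg, ← zpow_add, hm, zpow_mul]
    exact D.zpow_mem hcD _
  exact finiteIndex_of_finite_quotient

theorem VirtuallyCyclic.finiteIndex_of_infinite {G : Type*} [Group G] [Infinite G]
    (hG : VirtuallyCyclic G) {A : Subgroup G} [Infinite A] : A.FiniteIndex := by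
  obtain ⟨C, hC, hCfin⟩ := hG
  have hCA : Infinite ↥(C ⊓ A) := infinite_inf_of_relIndex_ne_zero FiniteIndex.index_ne_zero
  have : Infinite (A.subgroupOf C) := infinite_subgroupOf_iff.mpr (inf_comm C A ▸ hCA)
  have : (A.subgroupOf C).FiniteIndex :=
    hC.finiteIndex_of_ne_bot ((nontrivial_iff_ne_bot _).mp inferInstance)
  refine ⟨?_⟩
  rw [← relIndex_top_right]
  exact relIndex_ne_zero_trans FiniteIndex.index_ne_zero
    (C.relIndex_top_right ▸ hCfin.index_ne_zero)

namespace Subgroup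

variable {G : Type*} [Group G]

theorem infinite_inf_iff_relIndex_ne_zero {H K : Subgroup G} [Infinite K]
    (hK : VirtuallyCyclic K) : Infinite ↥(H ⊓ K) ↔ H.relIndex K ≠ 0 := by
  refine ⟨fun h => ?_, infinite_inf_of_relIndex_ne_zero⟩
  have : Infinite (H.subgroupOf K) := infinite_subgroupOf_iff.mpr h
  exact hK.finiteIndex_of_infinite.index_ne_zero

theorem infinite_inf_trans {H K L : Subgroup G} [Infinite K] [Infinite L]
    (hK : VirtuallyCyclic K) (hL : VirtuallyCyclic L)
    (hHK : Infinite ↥(H ⊓ K)) (hKL : Infinite ↥(K ⊓ L)) : Infinite ↥(H ⊓ L) := by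
  rw [infinite_inf_iff_relIndex_ne_zero hK] at hHK
  rw [infinite_inf_iff_relIndex_ne_zero hL] at hKL ⊢
  exact relIndex_ne_zero_trans hHK hKL

end Subgroup

/-- On the set of infinite virtually cyclic subgroups of a group `Γ`, the relation
declaring `H` and `K` equivalent when `H ⊓ K` is infinite is an equivalence relation;
in particular it is transitive. -/
theorem equivalence_commensurability_infinite_virtuallyCyclic
    {Γ : Type*} [Group Γ] :
    Equivalence
      (fun H K : {H : Subgroup Γ // Infinite H ∧ VirtuallyCyclic H} =>
        Infinite ↥(H.val ⊓ K.val)) ∧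
    ∀ H K L : Subgroup Γ,
      Infinite H → VirtuallyCyclic H →
      Infinite K → VirtuallyCyclic K →
      Infinite L → VirtuallyCyclic L →
      Infinite ↥(H ⊓ K) → Infinite ↥(K ⊓ L) → Infinite ↥(H ⊓ L) := by
  refine ⟨⟨fun H => ?_, fun {H K} h => ?_, fun {H K L} hHK hKL => ?_⟩, ?_⟩
  · simpa only [inf_idem] using H.2.1
  · exact inf_comm H.val K.val ▸ h
  · have := K.2.1
    have := L.2.1
    exact infinite_inf_trans K.2.2 L.2.2 hHK hKL
  · intro H K L _ _ _ hK _ hL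
    exact infinite_inf_trans hK hL
end

section
/- Let G be a group and let A be a normal subgroup of G that is free abelian of finite rank. Let h ∈ A be an element of infinite order such that for every g ∈ G there exist nonzero integers n and m with g⁻¹hⁿg = hᵐ. Then the cyclic subgroup ⟨h⟩ generated by h is a normal subgroup of G. -/
/-!
Let `L ≤ A` be the isolator of `⟨h⟩`, the elements of `A` with a nonzero power in `⟨h⟩`.
Since `A ≅ ℤʳ`, `L` is finitely generated, so one exponent `N ≠ 0` sends all of `L` into `⟨h⟩`;
as `A` is torsion-free, `a ↦ aᴺ` embeds `L` into `⟨h⟩`, hence `L = ⟨t⟩` is cyclic.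
Conjugation by `g` maps `L` into itself, say `g⁻¹tg = tᶜ`, and writing `h = tˢ` gives
`g⁻¹hg = tˢᶜ = hᶜ`.
-/

namespace Subgroup

theorem fg_of_isNoetherian {V : Type*} [AddCommGroup V] [IsNoetherian ℤ V]
    (L : Subgroup (Multiplicative V)) : L.FG := by
  have := IsNoetherian.noetherian (AddSubgroup.toIntSubmodule (AddSubgroup.toSubgroup.symm L))
  rw [Submodule.fg_iff_addSubgroup_fg, AddSubgroup.toIntSubmodule_toAddSubgroup,
    AddSubgroup.fg_iff_mul_fg] at this
  simpa using this

theorem fg_of_mulEquiv {M N : Type*} [Group M] [Group N] (e : M ≃* N)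
    (hN : ∀ L : Subgroup N, L.FG) (L : Subgroup M) : L.FG := by
  have := (Group.fg_iff_subgroup_fg _).mpr (hN (L.map (e : M →* N)))
  exact (Group.fg_iff_subgroup_fg L).mp <|
    Group.fg_of_surjective (f := (e.subgroupMap L).symm.toMonoidHom)
      (e.subgroupMap L).symm.surjective

section CommGroup

variable {M : Type*} [CommGroup M]

def isolator (H : Subgroup M) : Subgroup M where
  carrier := {a | ∃ k : ℤ, k ≠ 0 ∧ a ^ k ∈ H}
  one_mem' := ⟨1, one_ne_zero, by simp⟩
  mul_mem' := by
    rintro a b ⟨k, hk, hak⟩ ⟨l, hl, hbl⟩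
    refine ⟨k * l, mul_ne_zero hk hl, ?_⟩
    rw [mul_zpow, zpow_mul, mul_comm k, zpow_mul]
    exact H.mul_mem (H.zpow_mem hak l) (H.zpow_mem hbl k)
  inv_mem' := by
    rintro a ⟨k, hk, hak⟩
    exact ⟨k, hk, by simpa only [inv_zpow] using H.inv_mem hak⟩

theorem le_isolator (H : Subgroup M) : H ≤ H.isolator :=
  fun a ha => ⟨1, one_ne_zero, by simpa using ha⟩

theorem map_mem_isolator_zpowers {φ : M →* M} {h : M} {n : ℤ} (hn : n ≠ 0)
    (hφ : φ (h ^ n) ∈ zpowers h) {a : M} (ha : a ∈ (zpowers h).isolator) :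
    φ a ∈ (zpowers h).isolator := by
  obtain ⟨k, hk, hak⟩ := ha
  obtain ⟨i, hi⟩ := mem_zpowers_iff.mp hak
  refine ⟨k * n, mul_ne_zero hk hn, ?_⟩
  rw [zpow_mul, ← map_zpow, ← hi, ← map_zpow, ← zpow_mul, mul_comm, zpow_mul, map_zpow]
  exact zpow_mem hφ i

theorem exists_zpow_mem_of_fg_of_le_isolator {L H : Subgroup M} (hL : L.FG)
    (hLH : L ≤ H.isolator) : ∃ N : ℤ, N ≠ 0 ∧ ∀ a ∈ L, a ^ N ∈ H := by
  obtain ⟨S, rfl⟩ := hL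
  choose! k hk using fun a (ha : a ∈ S) => hLH (subset_closure ha)
  refine ⟨∏ a ∈ S, k a, Finset.prod_ne_zero_iff.mpr fun a ha => (hk a ha).1, ?_⟩
  suffices closure (S : Set M) ≤ H.comap (zpowGroupHom (∏ a ∈ S, k a)) from fun a ha => this ha
  refine (closure_le _).mpr fun a ha => ?_
  obtain ⟨c, hc⟩ := Finset.dvd_prod_of_mem k ha
  rw [SetLike.mem_coe, mem_comap, zpowGroupHom_apply, hc, zpow_mul]
  exact zpow_mem (hk a ha).2 c

theorem isCyclic_of_zpow_mem_zpowers [IsMulTorsionFree M] {L : Subgroup M} {h : M} {N : ℤ}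
    (hN : N ≠ 0) (hL : ∀ a ∈ L, a ^ N ∈ zpowers h) : IsCyclic L :=
  isCyclic_of_injective (((zpowGroupHom N).comp L.subtype).codRestrict _ fun a => hL a a.2)
    fun _ _ hab => Subtype.ext (zpow_left_injective hN (congrArg Subtype.val hab))

theorem map_mem_zpowers_of_map_zpow_mem [IsMulTorsionFree M] (hfg : ∀ L : Subgroup M, L.FG)
    (φ : M →* M) {h : M} {n : ℤ} (hn : n ≠ 0) (hφ : φ (h ^ n) ∈ zpowers h) :
    φ h ∈ zpowers h := by
  obtain ⟨N, hN, hLN⟩ := exists_zpow_mem_of_fg_of_le_isolator (hfg (zpowers h).isolator) le_rfl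
  have := isCyclic_of_zpow_mem_zpowers hN hLN
  obtain ⟨t, ht⟩ := ((zpowers h).isolator.isCyclic_iff_exists_zpowers_eq_top).mp this
  obtain ⟨s, rfl⟩ : ∃ s : ℤ, t ^ s = h :=
    mem_zpowers_iff.mp (ht ▸ le_isolator _ (mem_zpowers h))
  obtain ⟨c, hc⟩ : ∃ c : ℤ, t ^ c = φ t :=
    mem_zpowers_iff.mp (ht ▸ map_mem_isolator_zpowers hn hφ (ht ▸ mem_zpowers t))
  rw [map_zpow, ← hc, ← zpow_mul, mul_comm, zpow_mul]
  exact zpow_mem (mem_zpowers _) c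

end CommGroup

end Subgroup

theorem zpowers_normal_of_commensurated_general
    {G : Type*} [Group G] (A : Subgroup G) (hA : A.Normal)
    (hfree : ∃ r : ℕ, Nonempty (A ≃* Multiplicative (Fin r → ℤ)))
    (h : G) (hmem : h ∈ A)
    (hcomm : ∀ g : G, ∃ n m : ℤ, n ≠ 0 ∧ m ≠ 0 ∧ g⁻¹ * h ^ n * g = h ^ m) :
    (Subgroup.zpowers h).Normal := by
  obtain ⟨r, ⟨e⟩⟩ := hfree
  let : CommGroup A :=
    { mul_comm a b := e.injective (by rw [map_mul, map_mul, mul_comm]) }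
  have : IsMulTorsionFree A := Function.Injective.isMulTorsionFree e.toMonoidHom e.injective
  have hfg : ∀ L : Subgroup A, L.FG := Subgroup.fg_of_mulEquiv e Subgroup.fg_of_isNoetherian
  have hconj : ∀ g : G, g⁻¹ * h * g ∈ Subgroup.zpowers h := by
    intro g
    obtain ⟨n, m, hn, -, hnm⟩ := hcomm g
    let φ : A →* A := (MulAut.conjNormal (H := A) g).symm.toMonoidHom
    have hφ : φ (⟨h, hmem⟩ ^ n) ∈ Subgroup.zpowers ⟨h, hmem⟩ :=
      ⟨m, Subtype.ext <| by
        simpa only [φ, MulEquiv.coe_toMonoidHom, MulAut.conjNormal_symm_apply,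
          SubgroupClass.coe_zpow] using hnm.symm⟩
    obtain ⟨k, hk⟩ := Subgroup.mem_zpowers_iff.mp
      (Subgroup.map_mem_zpowers_of_map_zpow_mem hfg φ hn hφ)
    exact Subgroup.mem_zpowers_iff.mpr
      ⟨k, by simpa [φ, MulAut.conjNormal_symm_apply] using congrArg Subtype.val hk⟩
  refine ⟨fun x hx g => ?_⟩
  obtain ⟨k, rfl⟩ := Subgroup.mem_zpowers_iff.mp hx
  rw [← conj_zpow]
  simpa using Subgroup.zpow_mem _ (hconj g⁻¹) k

/-- Let `A` be a normal subgroup of `G` that is free abelian of finite rank, and let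
`h ∈ A` have infinite order.  If for every `g ∈ G` there are nonzero integers `n, m`
with `g⁻¹hⁿg = hᵐ`, then the cyclic subgroup `⟨h⟩` is normal in `G`. -/
theorem zpowers_normal_of_commensurated
    {G : Type*} [Group G] (A : Subgroup G) (hA : A.Normal)
    (hfree : ∃ r : ℕ, Nonempty (A ≃* Multiplicative (Fin r → ℤ)))
    (h : G) (hmem : h ∈ A) (hord : ¬ IsOfFinOrder h)
    (hcomm : ∀ g : G, ∃ n m : ℤ, n ≠ 0 ∧ m ≠ 0 ∧ g⁻¹ * h ^ n * g = h ^ m) :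
    (Subgroup.zpowers h).Normal :=
  zpowers_normal_of_commensurated_general A hA hfree h hmem hcomm
end

section
/- Let A ∈ SL(3,ℤ) be a matrix of infinite order such that 1 is not an eigenvalue of A over ℂ (i.e. det(A − I) ≠ 0). Then every g ∈ SL(3,ℤ) that normalizes the cyclic subgroup ⟨A⟩ (i.e. g⟨A⟩g⁻¹ = ⟨A⟩) commutes with A; in other words, the normalizer of ⟨A⟩ in SL(3,ℤ) equals the centralizer of A in SL(3,ℤ). -/
open Matrix

/-!
Conjugation by an element of the normalizer restricts to an automorphism of `⟨A⟩ ≅ ℤ`, so it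
sends `A` to `A` or to `A⁻¹`. In the second case `A` and `A⁻¹ = adj A` have the same trace,
while for a `3 × 3` matrix of determinant one `det (A - 1) = tr A - tr (adj A)` (the
characteristic polynomial evaluated at `1`). Hence `det (A - 1) = 0`, which is excluded.
-/

namespace Subgroup

variable {G : Type*} [Group G]

theorem conj_eq_self_or_inv_of_mem_normalizer_zpowers {a g : G} (ha : ¬IsOfFinOrder a)
    (hg : g ∈ normalizer (zpowers a : Set G)) : g * a * g⁻¹ = a ∨ g * a * g⁻¹ = a⁻¹ := by
  rw [mem_normalizer_iff''] at hg
  obtain ⟨k, hk : a ^ k = g * a * g⁻¹⟩ : g * a * g⁻¹ ∈ zpowers a := by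
    simpa [mul_assoc] using (hg (g * a * g⁻¹)).2
  obtain ⟨m, hm : a ^ m = g⁻¹ * a * g⟩ : g⁻¹ * a * g ∈ zpowers a := (hg a).1 (mem_zpowers a)
  have hmk : a ^ (m * k) = a ^ (1 : ℤ) := by
    have h_conj : (g⁻¹ * a * g) ^ k = g⁻¹ * a ^ k * g := by
      simpa using conj_zpow (a := g⁻¹) (b := a) (i := k)
    rw [_root_.zpow_mul, hm, h_conj, hk]
    group
  have hk_unit : IsUnit k :=
    IsUnit.of_mul_eq_one_right m (injective_zpow_iff_not_isOfFinOrder.mpr ha hmk)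
  rcases Int.isUnit_iff.mp hk_unit with rfl | rfl
  · exact Or.inl (by simpa using hk.symm)
  · exact Or.inr (by simpa using hk.symm)

theorem centralizer_singleton_le_normalizer_zpowers (a : G) :
    centralizer {a} ≤ normalizer (zpowers a : Set G) := by
  rw [← centralizer_closure, ← zpowers_eq_closure]
  exact centralizer_le_normalizer _

end Subgroup

theorem Matrix.det_sub_one_fin_three {R : Type*} [CommRing R] (A : Matrix (Fin 3) (Fin 3) R) :
    (A - 1).det = A.det - 1 + A.trace - A.adjugate.trace := by
  simp [det_fin_three, trace_fin_three, adjugate_fin_three, one_fin_three]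
  ring

namespace Matrix.SpecialLinearGroup

variable {R : Type*} [CommRing R]

theorem trace_conj {n : Type*} [Fintype n] [DecidableEq n] (g A : SpecialLinearGroup n R) :
    trace (↑(g * A * g⁻¹) : Matrix n n R) = trace (A : Matrix n n R) := by
  rw [coe_mul, coe_mul, trace_mul_cycle, ← coe_mul, ← coe_mul, inv_mul_cancel, one_mul]

theorem det_sub_one_eq_zero_of_conj_eq_inv {A g : SpecialLinearGroup (Fin 3) R}
    (h : g * A * g⁻¹ = A⁻¹) : ((A : Matrix (Fin 3) (Fin 3) R) - 1).det = 0 := by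
  rw [det_sub_one_fin_three, A.prop, ← coe_inv, ← h, trace_conj]
  ring

end Matrix.SpecialLinearGroup

/-- Let `A ∈ SL(3,ℤ)` have infinite order and suppose `1` is not an eigenvalue of `A`
(i.e. `det (A - I) ≠ 0`).  Then every `g ∈ SL(3,ℤ)` normalizing `⟨A⟩` commutes with `A`;
in other words the normalizer of `⟨A⟩` equals the centralizer of `A`. -/
theorem normalizer_eq_centralizer_of_no_fixed_eigenvalue
    (A : Matrix.SpecialLinearGroup (Fin 3) ℤ)
    (hord : ¬ IsOfFinOrder A)
    (h1 : (A.val - 1).det ≠ 0) :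
    (∀ g : Matrix.SpecialLinearGroup (Fin 3) ℤ,
        g ∈ Subgroup.normalizer (Subgroup.zpowers A : Set (Matrix.SpecialLinearGroup (Fin 3) ℤ)) → g * A = A * g) ∧
      Subgroup.normalizer (Subgroup.zpowers A : Set (Matrix.SpecialLinearGroup (Fin 3) ℤ)) =
        Subgroup.centralizer ({A} : Set (Matrix.SpecialLinearGroup (Fin 3) ℤ)) := by
  have h_comm : ∀ g ∈ Subgroup.normalizer (Subgroup.zpowers A : Set _), g * A = A * g := by
    intro g hg
    rcases Subgroup.conj_eq_self_or_inv_of_mem_normalizer_zpowers hord hg with h | h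
    · exact mul_inv_eq_iff_eq_mul.mp h
    · exact absurd (SpecialLinearGroup.det_sub_one_eq_zero_of_conj_eq_inv h) h1
  refine ⟨h_comm, le_antisymm (fun g hg => ?_)
    (Subgroup.centralizer_singleton_le_normalizer_zpowers A)⟩
  exact Subgroup.mem_centralizer_singleton_iff.mpr (h_comm g hg)
end

section
/- Let A ∈ SL(3,ℤ). Then every complex eigenvalue of A¹² that is a root of unity is equal to 1; that is, if z ∈ ℂ is a root of the characteristic polynomial of A¹² and zⁿ = 1 for some n ≥ 1, then z = 1. -/
open Matrix Polynomial

/-!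
An eigenvalue `z` of `A¹²` is `μ¹²` for an eigenvalue `μ` of `A`. If `z` is a root of unity, so is
`μ`; its minimal polynomial over `ℤ` is the cyclotomic polynomial `Φ_m`, `m = orderOf μ`, which
divides the cubic characteristic polynomial of `A`. Hence `φ(m) ≤ 3`, which forces `m ∣ 12`, so
`z = μ¹² = 1`.
-/

theorem Nat.prime_pow_dvd_twelve_of_totient_le_three {p k : ℕ} (hp : p.Prime)
    (h : (p ^ k).totient ≤ 3) : p ^ k ∣ 12 := by
  rcases k with _ | k
  · simp
  rw [Nat.totient_prime_pow_succ hp] at h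
  have hp4 : p ≤ 4 := by
    have := (Nat.le_mul_of_pos_left (p - 1) (pow_pos hp.pos k)).trans h
    omega
  have hk : k ≤ 1 := by
    have h2k : 2 ^ k ≤ 3 := (Nat.pow_le_pow_left hp.two_le k).trans <|
      (Nat.le_mul_of_pos_right _ (Nat.sub_pos_of_lt hp.one_lt)).trans h
    by_contra! hk
    have := Nat.pow_le_pow_right two_pos hk
    omega
  interval_cases p <;> interval_cases k <;> revert hp h <;> decide

theorem Nat.dvd_twelve_of_totient_le_three {m : ℕ} (hm : m ≠ 0) (h : m.totient ≤ 3) :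
    m ∣ 12 :=
  (Nat.dvd_iff_prime_pow_dvd_dvd 12 m).2 fun _ _ hp hpk =>
    Nat.prime_pow_dvd_twelve_of_totient_le_three hp <|
      (Nat.le_of_dvd (Nat.totient_pos.2 (Nat.pos_of_ne_zero hm)) (Nat.totient_dvd_of_dvd hpk)).trans h

theorem Matrix.aeval_charpoly_eq_zero_iff_mem_spectrum_map {ι R K : Type*} [Fintype ι]
    [DecidableEq ι] [CommRing R] [Field K] [Algebra R K] (M : Matrix ι ι R) (μ : K) :
    aeval μ M.charpoly = 0 ↔ μ ∈ spectrum K (M.map (algebraMap R K)) := by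
  rw [mem_spectrum_iff_isRoot_charpoly, charpoly_map, IsRoot, ← eval₂_eq_eval_map, aeval_def]

theorem Matrix.totient_orderOf_le_card_of_aeval_charpoly_eq_zero {ι K : Type*} [Fintype ι]
    [DecidableEq ι] [Field K] [CharZero K] (M : Matrix ι ι ℤ) {μ : K}
    (hμ : aeval μ M.charpoly = 0) (hfin : IsOfFinOrder μ) :
    (orderOf μ).totient ≤ Fintype.card ι := by
  have hpos := hfin.orderOf_pos
  have hprim := IsPrimitiveRoot.orderOf μ
  have hdvd : cyclotomic (orderOf μ) ℤ ∣ M.charpoly := by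
    rw [cyclotomic_eq_minpoly hprim hpos]
    exact minpoly.isIntegrallyClosed_dvd (hprim.isIntegral hpos) hμ
  simpa [natDegree_cyclotomic] using natDegree_le_of_dvd hdvd M.charpoly_monic.ne_zero

theorem Matrix.exists_pow_eq_of_aeval_charpoly_pow_eq_zero {ι R K : Type*} [Fintype ι]
    [DecidableEq ι] [CommRing R] [Field K] [IsAlgClosed K] [Algebra R K] (M : Matrix ι ι R)
    {k : ℕ} (hk : 0 < k) {z : K} (hz : aeval z (M ^ k).charpoly = 0) :
    ∃ μ, aeval μ M.charpoly = 0 ∧ μ ^ k = z := by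
  simp_rw [aeval_charpoly_eq_zero_iff_mem_spectrum_map, Matrix.map_pow,
    spectrum.map_pow_of_pos _ hk] at hz ⊢
  exact hz

/-- Every complex eigenvalue of `A¹²` (for `A ∈ SL(3,ℤ)`) that is a root of unity
equals `1`. -/
theorem eigenvalue_root_of_unity_of_pow_twelve
    (A : Matrix.SpecialLinearGroup (Fin 3) ℤ) (z : ℂ)
    (hz : Polynomial.aeval z ((A ^ 12).val.charpoly) = 0)
    (n : ℕ) (hn : 1 ≤ n) (hroot : z ^ n = 1) :
    z = 1 := by
  rw [Matrix.SpecialLinearGroup.coe_pow] at hz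
  obtain ⟨μ, hμ, rfl⟩ := exists_pow_eq_of_aeval_charpoly_pow_eq_zero _ (by norm_num) hz
  have hfin : IsOfFinOrder μ :=
    isOfFinOrder_iff_pow_eq_one.2 ⟨12 * n, by omega, by rw [pow_mul, hroot]⟩
  have h12 : orderOf μ ∣ 12 := Nat.dvd_twelve_of_totient_le_three hfin.orderOf_pos.ne' <| by
    simpa using totient_orderOf_le_card_of_aeval_charpoly_eq_zero _ hμ hfin
  exact orderOf_dvd_iff_pow_eq_one.1 h12
end

section
/- Let A ∈ SL(3,ℤ) be the block matrix A = [[1, a, b],[0, M]] whose first column is (1,0,0)ᵗ, whose first row is (1, a, b), and whose lower-right 2×2 block is M ∈ M₂(ℤ) with det M = 1, and assume det(M − I₂) ≠ 0 (1 is not an eigenvalue of M). Then every B ∈ SL(3,ℤ) commuting with A has the block form B = [[ε, x, y],[0, N]] with ε ∈ {1,−1} and N ∈ GL(2,ℤ), and the map sending B to its lower-right 2×2 block N is an injective group homomorphism from the centralizer of A in SL(3,ℤ) to the centralizer of M in GL(2,ℤ). -/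
/-!
Write `A = [[a, v], [0, M]]` and `B = [[ε, w], [c, N]]`. The lower-left block of `AB = BA`
reads `M c = a c`, so `c = 0` because `a` is not an eigenvalue of `M`. Hence `B` is block upper
triangular: `det B = ε det N`, and `B ↦ N` is multiplicative with `N` commuting with `M`.
If `N = 1` then `ε = 1`, and the upper-right block of `AB = BA` reads `w M = a w`, so `w = 0`
and `B = 1`.
-/

open Matrix

namespace Matrix

variable {R : Type*} [CommRing R] {n : ℕ}

theorem submatrix_succ_mul {X : Matrix (Fin (n + 1)) (Fin (n + 1)) R}
    (hX : ∀ i : Fin n, X i.succ 0 = 0) (Y : Matrix (Fin (n + 1)) (Fin (n + 1)) R) :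
    (X * Y).submatrix Fin.succ Fin.succ =
      X.submatrix Fin.succ Fin.succ * Y.submatrix Fin.succ Fin.succ := by
  ext i j
  simp [mul_apply, Fin.sum_univ_succ, hX]

theorem det_eq_mul_det_submatrix_succ {X : Matrix (Fin (n + 1)) (Fin (n + 1)) R}
    (hX : ∀ i : Fin n, X i.succ 0 = 0) : X.det = X 0 0 * (X.submatrix Fin.succ Fin.succ).det := by
  simp [det_succ_column_zero X, Fin.sum_univ_succ, hX]

theorem _root_.Commute.submatrix_succ {X Y : Matrix (Fin (n + 1)) (Fin (n + 1)) R}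
    (hX : ∀ i : Fin n, X i.succ 0 = 0) (hY : ∀ i : Fin n, Y i.succ 0 = 0) (hXY : Commute X Y) :
    Commute (X.submatrix Fin.succ Fin.succ) (Y.submatrix Fin.succ Fin.succ) := by
  rw [Commute, SemiconjBy, ← submatrix_succ_mul hX, ← submatrix_succ_mul hY, hXY.eq]

variable [IsDomain R] {A B : Matrix (Fin (n + 1)) (Fin (n + 1)) R}

theorem apply_succ_zero_eq_zero_of_commute (hA : ∀ i : Fin n, A i.succ 0 = 0)
    (hM : (A.submatrix Fin.succ Fin.succ - A 0 0 • 1).det ≠ 0) (hAB : Commute A B) (i : Fin n) :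
    B i.succ 0 = 0 := by
  have hcM : (A.submatrix Fin.succ Fin.succ - A 0 0 • 1) *ᵥ (fun i => B i.succ 0) = 0 := by
    rw [sub_mulVec, smul_mulVec, one_mulVec, sub_eq_zero]
    ext i
    simpa [mul_apply, Fin.sum_univ_succ, hA, mulVec, dotProduct, mul_comm]
      using congrFun (congrFun hAB.eq i.succ) 0
  exact congrFun (eq_zero_of_mulVec_eq_zero hM hcM) i

theorem eq_one_of_commute_of_submatrix_succ_eq_one (hA : ∀ i : Fin n, A i.succ 0 = 0)
    (hM : (A.submatrix Fin.succ Fin.succ - A 0 0 • 1).det ≠ 0) (hAB : Commute A B)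
    (hB00 : B 0 0 = 1) (hN : B.submatrix Fin.succ Fin.succ = 1) : B = 1 := by
  have hcol := apply_succ_zero_eq_zero_of_commute hA hM hAB
  have hN' : ∀ i j, B i.succ j.succ = (1 : Matrix (Fin n) (Fin n) R) i j :=
    fun i j => congrFun (congrFun hN i) j
  have hwM : (fun j => B 0 j.succ) ᵥ* (A.submatrix Fin.succ Fin.succ - A 0 0 • 1) = 0 := by
    rw [vecMul_sub, vecMul_smul, vecMul_one, sub_eq_zero]
    ext j
    simpa [mul_apply, Fin.sum_univ_succ, hB00, hN', one_apply, vecMul, dotProduct, mul_comm,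
      add_comm] using (congrFun (congrFun hAB.eq 0) j.succ).symm
  have hw := eq_zero_of_vecMul_eq_zero hM hwM
  ext i j
  refine Fin.cases (Fin.cases ?_ fun j => ?_) (fun i => Fin.cases ?_ fun j => ?_) i j
  · simpa using hB00
  · simpa [one_apply, (Fin.succ_ne_zero j).symm] using congrFun hw j
  · simpa using hcol i
  · simpa [one_apply] using hN' i j

end Matrix

namespace Matrix.SpecialLinearGroup

variable {R : Type*} [CommRing R] {n : ℕ}

theorem isUnit_apply_zero_zero {B : SpecialLinearGroup (Fin (n + 1)) R}
    (hB : ∀ i : Fin n, B i.succ 0 = 0) : IsUnit (B 0 0) :=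
  .of_mul_eq_one _ ((det_eq_mul_det_submatrix_succ hB).symm.trans B.det_coe)

theorem commute_of_mem_centralizer {A B : SpecialLinearGroup (Fin (n + 1)) R}
    (hB : B ∈ Subgroup.centralizer {A}) : Commute (A : Matrix (Fin (n + 1)) (Fin (n + 1)) R) B :=
  congrArg Subtype.val (Subgroup.mem_centralizer_singleton_iff.mp hB).symm

variable [IsDomain R] {A : SpecialLinearGroup (Fin (n + 1)) R}
  (hA : ∀ i : Fin n, A i.succ 0 = 0)
  (hM : ((A : Matrix (Fin (n + 1)) (Fin (n + 1)) R).submatrix Fin.succ Fin.succ - A 0 0 • 1).det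
    ≠ 0)

def centralizerLowerBlock : Subgroup.centralizer {A} →* GL (Fin n) R :=
  MonoidHom.toHomUnits
    { toFun := fun B => (B : Matrix (Fin (n + 1)) (Fin (n + 1)) R).submatrix Fin.succ Fin.succ
      map_one' := submatrix_one _ (Fin.succ_injective n)
      map_mul' := fun B _ => submatrix_succ_mul
        (apply_succ_zero_eq_zero_of_commute hA hM (commute_of_mem_centralizer B.2)) _ }


theorem centralizerLowerBlock_apply (B : Subgroup.centralizer {A}) :
    (centralizerLowerBlock hA hM B : Matrix (Fin n) (Fin n) R) =
      (B : Matrix (Fin (n + 1)) (Fin (n + 1)) R).submatrix Fin.succ Fin.succ :=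
  rfl

theorem centralizerLowerBlock_injective : Function.Injective (centralizerLowerBlock hA hM) := by
  refine (injective_iff_map_eq_one _).mpr fun B hB => ?_
  have hAB := commute_of_mem_centralizer B.2
  have hcol := apply_succ_zero_eq_zero_of_commute hA hM hAB
  have hN : (B : Matrix (Fin (n + 1)) (Fin (n + 1)) R).submatrix Fin.succ Fin.succ = 1 :=
    congrArg Units.val hB
  have hB00 : B.1 0 0 = 1 := by
    simpa [hN] using (det_eq_mul_det_submatrix_succ hcol).symm.trans B.1.det_coe
  exact Subtype.ext (Subtype.ext (eq_one_of_commute_of_submatrix_succ_eq_one hA hM hAB hB00 hN))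

end Matrix.SpecialLinearGroup

open Matrix.SpecialLinearGroup

theorem centralizer_block_form_and_injection_general
    (A : Matrix.SpecialLinearGroup (Fin 3) ℤ)
    (M : Matrix (Fin 2) (Fin 2) ℤ)
    (hA00 : A.val 0 0 = 1)
    (hAcol : ∀ i : Fin 2, A.val i.succ 0 = 0)
    (hblock : ∀ i j : Fin 2, A.val i.succ j.succ = M i j)
    (hM1 : (M - 1).det ≠ 0) :
    (∀ B ∈ Subgroup.centralizer ({A} : Set (Matrix.SpecialLinearGroup (Fin 3) ℤ)),
        (∀ i : Fin 2, B.val i.succ 0 = 0) ∧ (B.val 0 0 = 1 ∨ B.val 0 0 = -1)) ∧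
    ∃ f : ↥(Subgroup.centralizer ({A} : Set (Matrix.SpecialLinearGroup (Fin 3) ℤ))) →*
        GL (Fin 2) ℤ,
      Function.Injective f ∧
      (∀ B, ((f B : GL (Fin 2) ℤ) : Matrix (Fin 2) (Fin 2) ℤ) =
          Matrix.of fun i j : Fin 2 => (B : Matrix.SpecialLinearGroup (Fin 3) ℤ).val i.succ j.succ) ∧
      (∀ B, ((f B : GL (Fin 2) ℤ) : Matrix (Fin 2) (Fin 2) ℤ) * M =
          M * ((f B : GL (Fin 2) ℤ) : Matrix (Fin 2) (Fin 2) ℤ)) := by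
  have hM : M = (A : Matrix (Fin 3) (Fin 3) ℤ).submatrix Fin.succ Fin.succ :=
    Matrix.ext fun i j => (hblock i j).symm
  have hM' : ((A : Matrix (Fin 3) (Fin 3) ℤ).submatrix Fin.succ Fin.succ - A 0 0 • 1).det ≠ 0 := by
    rwa [← hM, hA00, one_smul]
  have hcol {B} (hB : B ∈ Subgroup.centralizer {A}) : ∀ i : Fin 2, B.val i.succ 0 = 0 :=
    apply_succ_zero_eq_zero_of_commute hAcol hM' (commute_of_mem_centralizer hB)
  refine ⟨fun B hB => ⟨hcol hB, Int.isUnit_iff.mp (isUnit_apply_zero_zero (hcol hB))⟩,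
    centralizerLowerBlock hAcol hM', centralizerLowerBlock_injective hAcol hM', fun B => rfl,
    fun B => ?_⟩
  rw [centralizerLowerBlock_apply, hM]
  exact ((commute_of_mem_centralizer B.2).submatrix_succ hAcol (hcol B.2)).eq.symm

/-- Let `A ∈ SL(3,ℤ)` be the block matrix `[[1, a, b],[0, M]]` with lower-right `2×2`
block `M` of determinant `1`, and suppose `1` is not an eigenvalue of `M`
(`det (M - I) ≠ 0`).  Then every `B ∈ SL(3,ℤ)` commuting with `A` has block form
`[[±1, x, y],[0, N]]`, and sending `B` to its lower-right block `N` is an injective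
group homomorphism from the centralizer of `A` in `SL(3,ℤ)` to the centralizer of `M`
in `GL(2,ℤ)`. -/
theorem centralizer_block_form_and_injection
    (A : Matrix.SpecialLinearGroup (Fin 3) ℤ)
    (M : Matrix (Fin 2) (Fin 2) ℤ) (hdetM : M.det = 1)
    (hA00 : A.val 0 0 = 1)
    (hAcol : ∀ i : Fin 2, A.val i.succ 0 = 0)
    (hblock : ∀ i j : Fin 2, A.val i.succ j.succ = M i j)
    (hM1 : (M - 1).det ≠ 0) :
    (∀ B ∈ Subgroup.centralizer ({A} : Set (Matrix.SpecialLinearGroup (Fin 3) ℤ)),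
        (∀ i : Fin 2, B.val i.succ 0 = 0) ∧ (B.val 0 0 = 1 ∨ B.val 0 0 = -1)) ∧
    ∃ f : ↥(Subgroup.centralizer ({A} : Set (Matrix.SpecialLinearGroup (Fin 3) ℤ))) →*
        GL (Fin 2) ℤ,
      Function.Injective f ∧
      (∀ B, ((f B : GL (Fin 2) ℤ) : Matrix (Fin 2) (Fin 2) ℤ) =
          Matrix.of fun i j : Fin 2 => (B : Matrix.SpecialLinearGroup (Fin 3) ℤ).val i.succ j.succ) ∧
      (∀ B, ((f B : GL (Fin 2) ℤ) : Matrix (Fin 2) (Fin 2) ℤ) * M =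
          M * ((f B : GL (Fin 2) ℤ) : Matrix (Fin 2) (Fin 2) ℤ)) :=
  centralizer_block_form_and_injection_general A M hA00 hAcol hblock hM1
end

section
/- Let M ∈ M₂(ℤ) with det M = 1 and |trace M| > 2. Then the centralizer of M in GL(2,ℤ) is isomorphic as a group to ℤ × ℤ/2ℤ. -/
/-!
Write `M = [[p, q], [r, s]]`, `t = p + s`, and let `μ, ν` be the roots of `x² - tx + 1`. They are
irrational, since `t² - 4` lies strictly between `(|t| - 1)²` and `t²`, and `q ≠ 0`. A matrix `B`
commuting with `M` preserves the eigenlines of `M` and acts on them by the scalars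
`f(B) = (m + nμ)/q` and `f'(B) = (m + nν)/q` with `m, n ∈ ℤ`, where `f(B) f'(B) = det B = ±1`.
So `B ↦ log |f(B)|` is a homomorphism from the centralizer to `ℝ`. Its kernel is `{±1}`: if
`|f(B)| = 1` then `n = 0` by irrationality of `μ`, and then `B` is scalar. Its image is discrete,
because bounding `f` and `f'` bounds `m` and `n`, and contains `log |μ| ≠ 0`; hence it is
infinite cyclic. A group mapping onto `ℤ` with kernel of order two is `ℤ × ℤ/2ℤ`: the kernel is
normal of order two, hence central, and the extension splits.
-/

open Matrix Set

lemma exists_disjoint_Ioo_of_finite {α : Type*} [LinearOrder α] {T : Set α} {b c : α}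
    (hbc : b < c) (hT : (T ∩ Ioo b c).Finite) : ∃ a, b < a ∧ Disjoint T (Ioo b a) := by
  rcases (T ∩ Ioo b c).eq_empty_or_nonempty with h | h
  · exact ⟨c, hbc, disjoint_iff_inter_eq_empty.mpr h⟩
  · obtain ⟨a, ⟨-, hba, hac⟩, hmin⟩ := exists_min_image _ id hT h
    exact ⟨a, hba, disjoint_left.mpr fun x hxT ⟨hbx, hxa⟩ ↦
      (hmin x ⟨hxT, hbx, hxa.trans hac⟩).not_gt hxa⟩

section GroupTheory

variable {G K : Type*} [Group G] [CommGroup K]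

lemma MonoidHom.exists_range_eq_zpowers [LinearOrder K] [IsOrderedMonoid K] [MulArchimedean K]
    (φ : G →* K) {a : K} (ha : 1 < a) (hgap : Disjoint (Set.range φ) (Ioo 1 a)) :
    ∃ g, φ.range = Subgroup.zpowers (φ g) := by
  obtain ⟨b, hb⟩ :=
    Subgroup.cyclic_of_isolated_one (H := φ.range) ha (by rwa [MonoidHom.coe_range])
  obtain ⟨g, rfl⟩ : b ∈ φ.range := hb ▸ Subgroup.subset_closure rfl
  exact ⟨g, hb.trans (Subgroup.zpowers_eq_closure _).symm⟩

theorem nonempty_mulEquiv_int_prod_zmod_two [IsMulTorsionFree K] (φ : G →* K) (g s : G)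
    (hg : φ.range = Subgroup.zpowers (φ g)) (hφ : φ ≠ 1)
    (hker : ∀ x, φ x = 1 ↔ x = 1 ∨ x = s) (hs : s ≠ 1) :
    Nonempty (G ≃* Multiplicative (ℤ × ZMod 2)) := by
  have hφs : φ s = 1 := (hker s).mpr (Or.inr rfl)
  have hg1 : φ g ≠ 1 := fun h ↦ hφ <| MonoidHom.range_eq_bot_iff.mp <| by
    rw [hg, h, Subgroup.zpowers_one_eq_bot]
  have hs_central : ∀ x, Commute s x := fun x ↦ by
    rcases (hker (x * s * x⁻¹)).mp (by simp [hφs]) with h | h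
    · exact absurd (conj_eq_one_iff.mp h) hs
    · exact (mul_inv_eq_iff_eq_mul.mp h).symm
  have hs2 : s * s = 1 := by
    rcases (hker (s * s)).mp (by simp [hφs]) with h | h
    · exact h
    · exact absurd (mul_eq_left.mp h) hs
  have hpow : ∀ ε ε' : ZMod 2, s ^ (ε + ε').val = s ^ ε.val * s ^ ε'.val := by
    intro ε ε'
    rw [ZMod.val_add, ← pow_eq_pow_mod _ (by rwa [sq]), pow_add]
  let Θ : Multiplicative (ℤ × ZMod 2) →* G := MonoidHom.mk'
    (fun x ↦ g ^ x.toAdd.1 * s ^ x.toAdd.2.val) fun x y ↦ by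
      simp only [toAdd_mul, Prod.fst_add, Prod.snd_add, _root_.zpow_add, hpow, mul_assoc,
        ((hs_central _).pow_left _).left_comm]
  refine ⟨(MulEquiv.ofBijective Θ ⟨(injective_iff_map_eq_one Θ).mpr fun x hx ↦ ?_,
    fun y ↦ ?_⟩).symm⟩
  · have hx' : g ^ x.toAdd.1 * s ^ x.toAdd.2.val = 1 := hx
    have hn : x.toAdd.1 = 0 := (IsMulTorsionFree.zpow_eq_one_iff_right hg1).mp <| by
      simpa [hφs] using congrArg φ hx'
    rw [hn, zpow_zero, one_mul] at hx'
    have hε : x.toAdd.2 = 0 := by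
      rcases (by decide : ∀ ε : ZMod 2, ε = 0 ∨ ε = 1) x.toAdd.2 with h | h
      · exact h
      · rw [h, ZMod.val_one, pow_one] at hx'
        exact absurd hx' hs
    exact toAdd_eq_zero.mp (Prod.ext hn hε)
  · have hy : φ y ∈ Subgroup.zpowers (φ g) := hg ▸ ⟨y, rfl⟩
    obtain ⟨n, hn⟩ := Subgroup.mem_zpowers_iff.mp hy
    rcases (hker (y * (g ^ n)⁻¹)).mp (by simp [hn]) with h | h
    · exact ⟨.ofAdd (n, 0), by simpa [Θ] using (mul_inv_eq_one.mp h).symm⟩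
    · exact ⟨.ofAdd (n, 1), by
        simpa [Θ, ZMod.val_one, (hs_central _).eq] using (mul_inv_eq_iff_eq_mul.mp h).symm⟩

end GroupTheory

lemma not_isSquare_sq_sub_four {t : ℤ} (ht : 2 < |t|) : ¬IsSquare (t ^ 2 - 4) := by
  rintro ⟨c, hc⟩
  have hc' : |c| * |c| = |t| * |t| - 4 := by rw [abs_mul_abs_self, abs_mul_abs_self]; linarith
  have hlt : |c| < |t| := by nlinarith [abs_nonneg c]
  nlinarith [abs_nonneg c]

lemma exists_irrational_add_eq_mul_eq_one {t : ℤ} (ht : 2 < |t|) :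
    ∃ μ ν : ℝ, Irrational μ ∧ μ ≠ ν ∧ μ + ν = t ∧ μ * ν = 1 := by
  have hd : (0 : ℤ) ≤ t ^ 2 - 4 := by nlinarith [sq_abs t]
  have hsqrt : Irrational √((t ^ 2 - 4 : ℤ) : ℝ) :=
    (irrational_sqrt_intCast_iff_of_nonneg hd).mpr (not_isSquare_sq_sub_four ht)
  refine ⟨(t + √((t ^ 2 - 4 : ℤ) : ℝ)) / 2, (t - √((t ^ 2 - 4 : ℤ) : ℝ)) / 2,
    (hsqrt.intCast_add t).div_natCast two_ne_zero, ?_, by ring, ?_⟩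
  · have := hsqrt.ne_zero
    contrapose! this
    linarith
  have hsq : √((t ^ 2 - 4 : ℤ) : ℝ) * √((t ^ 2 - 4 : ℤ) : ℝ) = t ^ 2 - 4 := by
    rw [Real.mul_self_sqrt (by exact_mod_cast hd)]
    push_cast
    ring
  linear_combination (-1 / 4 : ℝ) * hsq

lemma Matrix.apply_zero_one_ne_zero_of_two_lt_abs_trace {M : Matrix (Fin 2) (Fin 2) ℤ}
    (hdet : M.det = 1) (htr : 2 < |M.trace|) : M 0 1 ≠ 0 := by
  intro h
  rw [det_fin_two, h, zero_mul, sub_zero] at hdet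
  rw [trace_fin_two] at htr
  rcases Int.eq_one_or_neg_one_of_mul_eq_one' hdet with ⟨h0, h1⟩ | ⟨h0, h1⟩ <;>
    norm_num [h0, h1] at htr

lemma Matrix.relations_of_commute_fin_two {R : Type*} [CommRing R]
    {B M : Matrix (Fin 2) (Fin 2) R} (h : Commute B M) :
    B 0 1 * M 1 0 = B 1 0 * M 0 1 ∧ M 0 1 * (B 0 0 - B 1 1) = B 0 1 * (M 0 0 - M 1 1) := by
  have h00 := congrFun (congrFun h.eq 0) 0
  have h01 := congrFun (congrFun h.eq 0) 1
  simp only [mul_apply, Fin.sum_univ_two] at h00 h01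
  exact ⟨by linear_combination h00, by linear_combination h01⟩

lemma Matrix.eq_scalar_of_commute_fin_two {R : Type*} [CommRing R] [IsDomain R]
    {B M : Matrix (Fin 2) (Fin 2) R} (h : Commute B M) (hq : M 0 1 ≠ 0) (hB : B 0 1 = 0) :
    B = scalar (Fin 2) (B 0 0) := by
  obtain ⟨h1, h2⟩ := relations_of_commute_fin_two h
  have h10 : B 1 0 = 0 := by simpa [hB, hq] using h1.symm
  have h11 : B 0 0 = B 1 1 := by simpa [hB, hq, sub_eq_zero] using h2.symm
  ext i j
  fin_cases i <;> fin_cases j <;> simp [hB, h10, h11]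

lemma finite_setOf_abs_add_mul_le {μ ν : ℝ} (hμν : μ ≠ ν) (C : ℝ) :
    {p : ℤ × ℤ | |p.1 + p.2 * μ| ≤ C ∧ |p.1 + p.2 * ν| ≤ C}.Finite := by
  set D := 2 * C / |μ - ν|
  have hμν' : 0 < |μ - ν| := abs_pos.mpr (sub_ne_zero.mpr hμν)
  refine (isCompact_closedBall (0 : ℤ × ℤ) (max (C + D * |μ|) D)).finite_of_discrete.subset ?_
  rintro ⟨m, n⟩ ⟨hμ, hν⟩
  have hn : |(n : ℝ)| ≤ D := by
    rw [le_div_iff₀ hμν', ← abs_mul]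
    calc |(n : ℝ) * (μ - ν)| = |(m + n * μ) - (m + n * ν)| := by ring_nf
      _ ≤ |m + n * μ| + |m + n * ν| := abs_sub _ _
      _ ≤ 2 * C := by linarith
  have hm : |(m : ℝ)| ≤ C + D * |μ| :=
    calc |(m : ℝ)| = |(m + n * μ) - n * μ| := by ring_nf
      _ ≤ |m + n * μ| + |n * μ| := abs_sub _ _
      _ ≤ C + D * |μ| := by rw [abs_mul]; gcongr
  simp only [Metric.mem_closedBall, Prod.dist_eq, Int.dist_eq, Prod.fst_zero, Prod.snd_zero,
    Int.cast_zero, sub_zero]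
  exact max_le_max hm hn

/-- When `μ` is a root of the characteristic polynomial of `M` and `M 0 1 ≠ 0`, the vector
`(M 0 1, μ - M 0 0)` spans the `μ`-eigenline of `M`; a matrix `B` commuting with `M` preserves
that line and acts on it by the scalar `eigenlineScalar M μ B`. -/
noncomputable def eigenlineScalar (M : Matrix (Fin 2) (Fin 2) ℤ) (μ : ℝ)
    (B : Matrix (Fin 2) (Fin 2) ℤ) : ℝ :=
  (((B 0 0 * M 0 1 - B 0 1 * M 0 0 : ℤ) : ℝ) + B 0 1 * μ) / M 0 1

section EigenlineScalar

variable {M B : Matrix (Fin 2) (Fin 2) ℤ} {μ ν : ℝ}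

lemma eigenlineScalar_mul (hq : M 0 1 ≠ 0) (hμ : μ ^ 2 - M.trace * μ + M.det = 0)
    (hB : Commute B M) (A : Matrix (Fin 2) (Fin 2) ℤ) :
    eigenlineScalar M μ (A * B) = eigenlineScalar M μ A * eigenlineScalar M μ B := by
  obtain ⟨h1, h2⟩ := relations_of_commute_fin_two hB
  have hq' : (M 0 1 : ℝ) ≠ 0 := Int.cast_ne_zero.mpr hq
  have h1' : (B 0 1 : ℝ) * M 1 0 = B 1 0 * M 0 1 := by exact_mod_cast h1
  have h2' : (M 0 1 : ℝ) * (B 0 0 - B 1 1) = B 0 1 * (M 0 0 - M 1 1) := by exact_mod_cast h2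
  rw [trace_fin_two, det_fin_two] at hμ
  push_cast at hμ
  simp only [eigenlineScalar, mul_apply, Fin.sum_univ_two]
  push_cast
  field_simp
  linear_combination (A 0 1 : ℝ) * (M 0 0 - μ) * h2' - (A 0 1 : ℝ) * M 0 1 * h1'
      - (A 0 1 : ℝ) * B 0 1 * hμ

lemma eigenlineScalar_mul_eigenlineScalar (hq : M 0 1 ≠ 0) (hsum : μ + ν = M.trace)
    (hprod : μ * ν = M.det) (hB : Commute B M) :
    eigenlineScalar M μ B * eigenlineScalar M ν B = B.det := by
  obtain ⟨h1, h2⟩ := relations_of_commute_fin_two hB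
  have hq' : (M 0 1 : ℝ) ≠ 0 := Int.cast_ne_zero.mpr hq
  have h1' : (B 0 1 : ℝ) * M 1 0 = B 1 0 * M 0 1 := by exact_mod_cast h1
  have h2' : (M 0 1 : ℝ) * (B 0 0 - B 1 1) = B 0 1 * (M 0 0 - M 1 1) := by exact_mod_cast h2
  rw [trace_fin_two] at hsum
  rw [det_fin_two] at hprod ⊢
  push_cast at hsum hprod ⊢
  simp only [eigenlineScalar]
  push_cast
  field_simp
  linear_combination ((B 0 0 : ℝ) * M 0 1 - B 0 1 * M 0 0) * B 0 1 * hsum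
    + (B 0 1 : ℝ) ^ 2 * hprod + (B 0 0 : ℝ) * M 0 1 * h2' - (B 0 1 : ℝ) * M 0 1 * h1'

lemma eigenlineScalar_of_apply_zero_one_eq_zero (hq : M 0 1 ≠ 0) (hB : B 0 1 = 0) :
    eigenlineScalar M μ B = B 0 0 := by
  have hq' : (M 0 1 : ℝ) ≠ 0 := Int.cast_ne_zero.mpr hq
  simp [eigenlineScalar, hB, hq']

lemma eigenlineScalar_self (hq : M 0 1 ≠ 0) : eigenlineScalar M μ M = μ := by
  have hq' : (M 0 1 : ℝ) ≠ 0 := Int.cast_ne_zero.mpr hq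
  simp only [eigenlineScalar]
  push_cast
  field_simp
  ring

lemma irrational_eigenlineScalar (hq : M 0 1 ≠ 0) (hμ : Irrational μ) (hB : B 0 1 ≠ 0) :
    Irrational (eigenlineScalar M μ B) :=
  ((hμ.intCast_mul hB).intCast_add _).div_intCast hq

lemma eq_one_or_eq_neg_one_of_abs_eigenlineScalar_eq_one (hq : M 0 1 ≠ 0) (hμ : Irrational μ)
    (hB : Commute B M) (h : |eigenlineScalar M μ B| = 1) : B = 1 ∨ B = -1 := by
  have hB01 : B 0 1 = 0 := by
    by_contra hB01
    have hirr := irrational_eigenlineScalar hq hμ hB01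
    rcases (abs_eq zero_le_one).mp h with h | h
    · exact hirr.ne_one h
    · exact hirr.ne_int (-1) (by simpa using h)
  rw [eigenlineScalar_of_apply_zero_one_eq_zero hq hB01, ← Int.cast_abs, Int.cast_eq_one,
    abs_eq zero_le_one] at h
  rw [eq_scalar_of_commute_fin_two hB hq hB01]
  rcases h with h | h <;> simp [h]

lemma finite_image_eigenlineScalar (hq : M 0 1 ≠ 0) (hμν : μ ≠ ν) (C : ℝ) :
    (eigenlineScalar M μ ''
      {B | |eigenlineScalar M μ B| ≤ C ∧ |eigenlineScalar M ν B| ≤ C}).Finite := by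
  have hq' : 0 < |(M 0 1 : ℝ)| := abs_pos.mpr (Int.cast_ne_zero.mpr hq)
  refine ((finite_setOf_abs_add_mul_le hμν (C * |(M 0 1 : ℝ)|)).image
    fun p ↦ (p.1 + p.2 * μ) / M 0 1).subset ?_
  rintro _ ⟨B, ⟨hμ, hν⟩, rfl⟩
  refine ⟨(B 0 0 * M 0 1 - B 0 1 * M 0 0, B 0 1), ⟨?_, ?_⟩, rfl⟩ <;>
    rwa [← div_le_iff₀ hq', ← abs_div]

end EigenlineScalar

section Centralizer

variable {A : GL (Fin 2) ℤ} {μ ν : ℝ}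

lemma neg_one_mem_centralizer {n R : Type*} [Fintype n] [DecidableEq n] [CommRing R]
    (A : GL n R) : -1 ∈ Subgroup.centralizer {A} :=
  Subgroup.mem_centralizer_singleton_iff.mpr (by rw [neg_one_mul, mul_neg_one])

lemma commute_of_mem_centralizer {X : GL (Fin 2) ℤ} (hX : X ∈ Subgroup.centralizer {A}) :
    Commute X.val A.val :=
  congrArg Units.val (Subgroup.mem_centralizer_singleton_iff.mp hX)

lemma abs_eigenlineScalar_mul_abs_eigenlineScalar (hq : A.val 0 1 ≠ 0)
    (hsum : μ + ν = A.val.trace) (hprod : μ * ν = A.val.det) {X : GL (Fin 2) ℤ}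
    (hX : X ∈ Subgroup.centralizer {A}) :
    |eigenlineScalar A μ X| * |eigenlineScalar A ν X| = 1 := by
  rw [← abs_mul,
    eigenlineScalar_mul_eigenlineScalar hq hsum hprod (commute_of_mem_centralizer hX),
    ← GeneralLinearGroup.val_det_apply, ← Int.cast_abs,
    Int.isUnit_iff_abs_eq.mp (GeneralLinearGroup.det X).isUnit, Int.cast_one]

lemma eigenlineScalar_ne_zero (hq : A.val 0 1 ≠ 0) (hsum : μ + ν = A.val.trace)
    (hprod : μ * ν = A.val.det) {X : GL (Fin 2) ℤ} (hX : X ∈ Subgroup.centralizer {A}) :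
    eigenlineScalar A μ X ≠ 0 := fun h ↦ by
  simpa [h] using abs_eigenlineScalar_mul_abs_eigenlineScalar hq hsum hprod hX

noncomputable def logAbsEigenlineScalar (hq : A.val 0 1 ≠ 0) (hsum : μ + ν = A.val.trace)
    (hprod : μ * ν = A.val.det) : Subgroup.centralizer {A} →* Multiplicative ℝ :=
  MonoidHom.mk' (fun X ↦ .ofAdd (Real.log |eigenlineScalar A μ (X : GL (Fin 2) ℤ)|))
    fun X Y ↦ by
      have hμ : μ ^ 2 - A.val.trace * μ + A.val.det = 0 := by rw [← hsum, ← hprod]; ring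
      rw [Subgroup.coe_mul, Units.val_mul,
        eigenlineScalar_mul hq hμ (commute_of_mem_centralizer Y.2), abs_mul,
        Real.log_mul (abs_ne_zero.mpr (eigenlineScalar_ne_zero hq hsum hprod X.2))
          (abs_ne_zero.mpr (eigenlineScalar_ne_zero hq hsum hprod Y.2)), ofAdd_add]

variable (hq : A.val 0 1 ≠ 0) (hsum : μ + ν = A.val.trace) (hprod : μ * ν = A.val.det)

lemma logAbsEigenlineScalar_eq_one_iff (hμ : Irrational μ) (X : Subgroup.centralizer {A}) :
    logAbsEigenlineScalar hq hsum hprod X = 1 ↔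
      X = 1 ∨ X = ⟨-1, neg_one_mem_centralizer A⟩ := by
  have hpos := abs_pos.mpr (eigenlineScalar_ne_zero hq hsum hprod X.2)
  rw [logAbsEigenlineScalar, MonoidHom.mk'_apply, ofAdd_eq_one,
    ← Real.exp_eq_one_iff, Real.exp_log hpos]
  constructor
  · intro h
    rcases eq_one_or_eq_neg_one_of_abs_eigenlineScalar_eq_one hq hμ
      (commute_of_mem_centralizer X.2) h with h | h
    · exact .inl (Subtype.ext (Units.ext h))
    · exact .inr (Subtype.ext (Units.ext h))
  · rintro (rfl | rfl) <;> simp [eigenlineScalar_of_apply_zero_one_eq_zero hq]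

lemma logAbsEigenlineScalar_ne_one (hμ : Irrational μ) :
    logAbsEigenlineScalar hq hsum hprod ≠ 1 := by
  refine DFunLike.ne_iff.mpr ⟨⟨A, Subgroup.mem_centralizer_singleton_iff.mpr rfl⟩, ?_⟩
  rw [logAbsEigenlineScalar, MonoidHom.mk'_apply, eigenlineScalar_self hq, Real.log_abs,
    MonoidHom.one_apply, Ne, ofAdd_eq_one, Real.log_eq_zero]
  rintro (h | h | h)
  · exact hμ.ne_zero h
  · exact hμ.ne_one h
  · exact hμ.ne_int (-1) (by simpa using h)

lemma finite_range_logAbsEigenlineScalar_inter_Ioo (hμν : μ ≠ ν) :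
    (Set.range (logAbsEigenlineScalar hq hsum hprod) ∩ Ioo 1 (.ofAdd 1)).Finite := by
  refine ((finite_image_eigenlineScalar hq hμν (Real.exp 1)).image
    fun x ↦ Multiplicative.ofAdd (Real.log |x|)).subset ?_
  rintro _ ⟨⟨X, rfl⟩, hlog_pos, hlog_lt⟩
  have hprod1 := abs_eigenlineScalar_mul_abs_eigenlineScalar hq hsum hprod X.2
  have hpos := abs_pos.mpr (eigenlineScalar_ne_zero hq hsum hprod X.2)
  rw [logAbsEigenlineScalar, MonoidHom.mk'_apply, ← ofAdd_zero, Multiplicative.ofAdd_lt,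
    Real.log_pos_iff hpos.le] at hlog_pos
  rw [logAbsEigenlineScalar, MonoidHom.mk'_apply, Multiplicative.ofAdd_lt,
    Real.log_lt_iff_lt_exp hpos] at hlog_lt
  have hν : |eigenlineScalar A ν (X : GL (Fin 2) ℤ)| ≤ 1 := by
    nlinarith [abs_nonneg (eigenlineScalar A ν (X : GL (Fin 2) ℤ))]
  exact ⟨_, ⟨(X : GL (Fin 2) ℤ), ⟨hlog_lt.le, hν.trans (Real.one_le_exp zero_le_one)⟩, rfl⟩,
    rfl⟩

end Centralizer

/-- If `M` is an integral `2×2` matrix of determinant `1` with `|trace M| > 2`, then the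
centralizer of `M` in `GL(2,ℤ)` is isomorphic to `ℤ × ℤ/2ℤ`. -/
theorem centralizer_hyperbolic_GL2Z
    (M : Matrix.SpecialLinearGroup (Fin 2) ℤ)
    (htr : |(M.val).trace| > 2) :
    Nonempty (↥(Subgroup.centralizer
        ({Matrix.SpecialLinearGroup.toGL M} : Set (GL (Fin 2) ℤ))) ≃*
      Multiplicative (ℤ × ZMod 2)) := by
  have hdet : M.val.det = 1 := M.2
  have hq := apply_zero_one_ne_zero_of_two_lt_abs_trace hdet htr
  obtain ⟨μ, ν, hμ, hμν, hsum, hprod⟩ := exists_irrational_add_eq_mul_eq_one htr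
  have hprod' : μ * ν = (M : GL (Fin 2) ℤ).val.det := by rw [hprod]; exact_mod_cast hdet.symm
  let φ := logAbsEigenlineScalar hq hsum hprod'
  obtain ⟨a, ha, hgap⟩ := exists_disjoint_Ioo_of_finite
    ((Multiplicative.ofAdd_lt (α := ℝ)).mpr one_pos)
    (finite_range_logAbsEigenlineScalar_inter_Ioo hq hsum hprod' hμν)
  obtain ⟨g, hg⟩ := φ.exists_range_eq_zpowers ha hgap
  refine nonempty_mulEquiv_int_prod_zmod_two φ g _ hg
    (logAbsEigenlineScalar_ne_one hq hsum hprod' hμ)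
    (logAbsEigenlineScalar_eq_one_iff hq hsum hprod' hμ) fun h ↦ ?_
  simpa using congrArg (fun X : Subgroup.centralizer _ ↦ X.val.val 0 0) h
end

section
/- Let a, b, c ∈ ℤ with a ≠ 0 and b ≠ 0, and let A ∈ SL(3,ℤ) be the upper unitriangular matrix with rows (1, a, c), (0, 1, b), (0, 0, 1). Then a matrix B ∈ SL(3,ℤ) commutes with A if and only if there exist x, y, z ∈ ℤ with a·y − b·x = 0 such that B is the upper unitriangular matrix with rows (1, x, z), (0, 1, y), (0, 0, 1). Consequently, the centralizer of A in SL(3,ℤ) is isomorphic to ℤ². -/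
/-!
A matrix commuting with `U(a,b,c) = !![1, a, c; 0, 1, b; 0, 0, 1]`, `a, b ≠ 0`, is upper triangular
with constant diagonal `d`; in `SL(3,ℤ)` this forces `d ^ 3 = 1`, so `d = 1`. Two unitriangular
matrices `U(x,y,z)` and `U(x',y',z')` commute iff `x * y' = x' * y`, so the centralizer consists of
the `U(x,y,z)` with `(x,y)` on the line `ℤ • (a', b')`, `(a', b') = (a, b) / gcd(a, b)`. On that line
the cocycle `x * y'` of the group law is `a' * b' * s * t`, the coboundary of `a' * b' * choose t 2`;
correcting the corner entry by it makes `(t, z) ↦ U(a' t, b' t, z + a' b' choose t 2)` an injective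
homomorphism from `ℤ²` onto the centralizer.
-/

lemma Ring.choose_two_add {R : Type*} [CommRing R] [BinomialRing R] (s t : R) :
    Ring.choose (s + t) 2 = Ring.choose s 2 + Ring.choose t 2 + s * t := by
  rw [Ring.add_choose_eq 2 (Commute.all s t), Finset.Nat.sum_antidiagonal_succ,
    Finset.Nat.sum_antidiagonal_succ, Finset.Nat.antidiagonal_zero, Finset.sum_singleton]
  simp only [zero_add, Ring.choose_zero_right, Ring.choose_one_right]
  ring

lemma Int.exists_generator_mul_eq_mul {a : ℤ} (b : ℤ) (ha : a ≠ 0) :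
    ∃ a' b' : ℤ, a' ≠ 0 ∧ ∀ x y : ℤ, a * y = b * x ↔ ∃ t, x = a' * t ∧ y = b' * t := by
  obtain ⟨g, a', b', hg, hcop, rfl, rfl⟩ := Int.exists_gcd_one' (Int.gcd_pos_of_ne_zero_left b ha)
  have hg0 : (g : ℤ) ≠ 0 := by exact_mod_cast hg.ne'
  have ha' : a' ≠ 0 := left_ne_zero_of_mul ha
  refine ⟨a', b', ha', fun x y => ⟨fun h => ?_, ?_⟩⟩
  · have h' : a' * y = b' * x := mul_right_cancel₀ hg0 (by linear_combination h)
    obtain ⟨t, rfl⟩ : a' ∣ x :=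
      (Int.isCoprime_iff_gcd_eq_one.mpr hcop).dvd_of_dvd_mul_left ⟨y, by linear_combination -h'⟩
    exact ⟨t, rfl, mul_left_cancel₀ ha' (by linear_combination h')⟩
  · rintro ⟨t, rfl, rfl⟩
    ring

lemma Matrix.exists_eq_of_mul_comm_unitriangular {R : Type*} [CommRing R] [IsDomain R]
    {a b c : R} (ha : a ≠ 0) (hb : b ≠ 0) {M : Matrix (Fin 3) (Fin 3) R}
    (hM : M * !![1, a, c; 0, 1, b; 0, 0, 1] = !![1, a, c; 0, 1, b; 0, 0, 1] * M) :
    ∃ d x y z : R, M = !![d, x, z; 0, d, y; 0, 0, d] := by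
  rw [eta_fin_three M] at hM ⊢
  generalize M 0 0 = m₀₀, M 0 1 = m₀₁, M 0 2 = m₀₂, M 1 0 = m₁₀, M 1 1 = m₁₁, M 1 2 = m₁₂,
    M 2 0 = m₂₀, M 2 1 = m₂₁, M 2 2 = m₂₂ at hM ⊢
  simp only [mul_fin_three, EmbeddingLike.apply_eq_iff_eq, vecCons_inj, and_true] at hM
  obtain ⟨⟨-, e₀₁, -⟩, ⟨e₁₀, e₁₁, e₁₂⟩, -, -, e₂₂⟩ := hM
  obtain rfl : m₂₀ = 0 := mul_left_cancel₀ hb (by linear_combination -e₁₀)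
  obtain rfl : m₂₁ = 0 := mul_left_cancel₀ hb (by linear_combination e₂₂)
  obtain rfl : m₁₀ = 0 := mul_left_cancel₀ ha (by linear_combination e₁₁)
  obtain rfl : m₀₀ = m₁₁ := mul_left_cancel₀ ha (by linear_combination e₀₁)
  obtain rfl : m₂₂ = m₀₀ := mul_left_cancel₀ hb (by linear_combination -e₁₂)
  exact ⟨_, _, _, _, rfl⟩

namespace Matrix.SpecialLinearGroup

variable {R : Type*} [CommRing R]

def unitriangular (x y z : R) : SpecialLinearGroup (Fin 3) R :=
  ⟨!![1, x, z; 0, 1, y; 0, 0, 1], by simp [det_fin_three]⟩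

@[simp]
lemma coe_unitriangular (x y z : R) :
    (unitriangular x y z : Matrix (Fin 3) (Fin 3) R) = !![1, x, z; 0, 1, y; 0, 0, 1] :=
  rfl

lemma unitriangular_inj {x y z x' y' z' : R} :
    unitriangular x y z = unitriangular x' y' z' ↔ x = x' ∧ y = y' ∧ z = z' := by
  refine ⟨fun h => ?_, fun ⟨rfl, rfl, rfl⟩ => rfl⟩
  simpa using congrArg (fun B : SpecialLinearGroup (Fin 3) R => (B 0 1, B 1 2, B 0 2)) h

lemma unitriangular_mul (x y z x' y' z' : R) :
    unitriangular x y z * unitriangular x' y' z' =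
      unitriangular (x + x') (y + y') (z + z' + x * y') := by
  ext i j
  fin_cases i <;> fin_cases j <;> simp <;> ring

lemma commute_unitriangular_iff {x y z x' y' z' : R} :
    Commute (unitriangular x y z) (unitriangular x' y' z') ↔ x * y' = x' * y := by
  rw [Commute, SemiconjBy, unitriangular_mul, unitriangular_mul, unitriangular_inj]
  constructor
  · rintro ⟨-, -, h⟩
    linear_combination h
  · intro h
    refine ⟨add_comm _ _, add_comm _ _, ?_⟩
    linear_combination h

section BinomialRing

variable [BinomialRing R]

def unitriangularLineHom (p q : R) : Multiplicative (R × R) →* SpecialLinearGroup (Fin 3) R :=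
  MonoidHom.mk' (fun v => unitriangular (p * v.toAdd.1) (q * v.toAdd.1)
      (v.toAdd.2 + p * q * Ring.choose v.toAdd.1 2)) fun v w => by
    simp only [toAdd_mul, Prod.fst_add, Prod.snd_add, unitriangular_mul, unitriangular_inj,
      Ring.choose_two_add]
    exact ⟨by ring, by ring, by ring⟩

@[simp]
lemma unitriangularLineHom_ofAdd (p q t z : R) :
    unitriangularLineHom p q (.ofAdd (t, z)) =
      unitriangular (p * t) (q * t) (z + p * q * Ring.choose t 2) :=
  rfl

lemma mem_range_unitriangularLineHom {p q : R} {B : SpecialLinearGroup (Fin 3) R} :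
    B ∈ (unitriangularLineHom p q).range ↔ ∃ t z, B = unitriangular (p * t) (q * t) z := by
  constructor
  · rintro ⟨v, rfl⟩
    exact ⟨_, _, rfl⟩
  · rintro ⟨t, z, rfl⟩
    exact ⟨.ofAdd (t, z - p * q * Ring.choose t 2), by simp⟩

lemma unitriangularLineHom_injective [IsDomain R] {p : R} (hp : p ≠ 0) (q : R) :
    Function.Injective (unitriangularLineHom p q) := by
  intro v w h
  obtain ⟨ht, -, hz⟩ := unitriangular_inj.mp h
  have ht' := mul_left_cancel₀ hp ht
  rw [ht', add_left_inj] at hz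
  exact Multiplicative.toAdd.injective (Prod.ext ht' hz)

end BinomialRing

lemma exists_unitriangular_of_commute {a b c : ℤ} (ha : a ≠ 0) (hb : b ≠ 0)
    {B : SpecialLinearGroup (Fin 3) ℤ} (h : Commute B (unitriangular a b c)) :
    ∃ x y z : ℤ, B = unitriangular x y z := by
  obtain ⟨d, x, y, z, hB⟩ :=
    exists_eq_of_mul_comm_unitriangular ha hb (congrArg Subtype.val h)
  have hd : d ^ 3 = 1 ^ 3 := by simpa [hB, det_fin_three, pow_three, mul_assoc] using B.det_coe
  obtain rfl : d = 1 := (Nat.odd_iff.mpr rfl).pow_inj.mp hd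
  exact ⟨x, y, z, Subtype.ext hB⟩

lemma commute_unitriangular_iff_exists {a b c : ℤ} (ha : a ≠ 0) (hb : b ≠ 0)
    {B : SpecialLinearGroup (Fin 3) ℤ} :
    Commute B (unitriangular a b c) ↔ ∃ x y z : ℤ, a * y = b * x ∧ B = unitriangular x y z := by
  constructor
  · intro h
    obtain ⟨x, y, z, rfl⟩ := exists_unitriangular_of_commute ha hb h
    exact ⟨x, y, z, by linear_combination -commute_unitriangular_iff.mp h, rfl⟩
  · rintro ⟨x, y, z, hxy, rfl⟩
    exact commute_unitriangular_iff.mpr (by linear_combination -hxy)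

lemma centralizer_unitriangular {a b c : ℤ} (ha : a ≠ 0) (hb : b ≠ 0) {p q : ℤ}
    (hpq : ∀ x y : ℤ, a * y = b * x ↔ ∃ t, x = p * t ∧ y = q * t) :
    Subgroup.centralizer {unitriangular a b c} = (unitriangularLineHom p q).range := by
  ext B
  rw [Subgroup.mem_centralizer_singleton_iff, mem_range_unitriangularLineHom]
  refine (commute_unitriangular_iff_exists ha hb).trans ⟨?_, ?_⟩
  · rintro ⟨x, y, z, hxy, rfl⟩
    obtain ⟨t, rfl, rfl⟩ := (hpq x y).mp hxy
    exact ⟨t, z, rfl⟩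
  · rintro ⟨t, z, rfl⟩
    exact ⟨p * t, q * t, z, (hpq _ _).mpr ⟨t, rfl, rfl⟩, rfl⟩

end Matrix.SpecialLinearGroup

open Matrix.SpecialLinearGroup in
/-- Let `A ∈ SL(3,ℤ)` be the unitriangular matrix with rows `(1,a,c), (0,1,b), (0,0,1)`
where `a ≠ 0` and `b ≠ 0`.  Then `B ∈ SL(3,ℤ)` commutes with `A` iff `B` is unitriangular
with rows `(1,x,z),(0,1,y),(0,0,1)` satisfying `a·y - b·x = 0`; consequently the
centralizer of `A` in `SL(3,ℤ)` is isomorphic to `ℤ²`. -/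
theorem centralizer_generic_unitriangular
    (a b c : ℤ) (ha : a ≠ 0) (hb : b ≠ 0)
    (A : Matrix.SpecialLinearGroup (Fin 3) ℤ)
    (hA : A.val = !![1, a, c; 0, 1, b; 0, 0, 1]) :
    (∀ B : Matrix.SpecialLinearGroup (Fin 3) ℤ,
        B * A = A * B ↔
          ∃ x y z : ℤ, a * y - b * x = 0 ∧ B.val = !![1, x, z; 0, 1, y; 0, 0, 1]) ∧
    Nonempty (↥(Subgroup.centralizer ({A} : Set (Matrix.SpecialLinearGroup (Fin 3) ℤ))) ≃*
      Multiplicative (ℤ × ℤ)) := by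
  obtain rfl : A = unitriangular a b c := Subtype.ext hA
  refine ⟨fun B => ?_, ?_⟩
  · rw [← commute_iff_eq, commute_unitriangular_iff_exists ha hb]
    exact exists₃_congr fun x y z => and_congr sub_eq_zero.symm Subtype.ext_iff
  · obtain ⟨p, q, hp, hpq⟩ := Int.exists_generator_mul_eq_mul b ha
    rw [centralizer_unitriangular ha hb hpq]
    exact ⟨(MonoidHom.ofInjective (unitriangularLineHom_injective hp q)).symm⟩
end
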